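/- arXiv:2502.08286 — 2 statements merged into one kernel-verified Lean document; each statement's English description precedes it below -/
import Mathlib

section
/- Assume X = {x ∈ ℝ^n : A x ≤ a, x ≥ 0} is nonempty and bounded and the system D y ≤ d is consistent, and let h ∈ ℝ. Then the system {−Aᵀu ≤ C y + g, a·u ≤ e·y − h, u ≥ 0} has a solution u ∈ ℝ^q for every y ∈ ℝ^m satisfying D y ≤ d, if and only if the system {−Dᵀv = Cᵀx + e, d·v ≤ g·x − h, v ≥ 0} has a solution v ∈ ℝ^p for every x ∈ ℝ^n satisfying A x ≤ a, x ≥ 0. -/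
/-!
Both conditions say that `h ≤ x ⬝ᵥ C *ᵥ y + g ⬝ᵥ x + e ⬝ᵥ y` for every `x ∈ X` and every `y`
with `D *ᵥ y ≤ d`. Indeed, for fixed `y` (resp. `x`) this is a lower bound for a linear function
on a nonempty polyhedron, and by the affine Farkas lemma every such bound has a nonnegative dual
certificate `u` (resp. `v`). Farkas' lemma itself is the separation theorem for closed convex
cones, applied to a finitely generated cone, which is closed by the conic Carathéodory theorem.
-/

open Matrix

section ConicCombination

variable {ι E : Type*} [AddCommGroup E] [Module ℝ E] {v : ι → E}

theorem exists_nonneg_combination_erase_of_not_linearIndepOn [DecidableEq ι] {s : Finset ι}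
    (hs : ¬LinearIndepOn ℝ v s) {c : ι → ℝ} (hc : ∀ i ∈ s, 0 ≤ c i) :
    ∃ i₀ ∈ s, ∃ c' : ι → ℝ, (∀ i ∈ s, 0 ≤ c' i) ∧
      ∑ i ∈ s.erase i₀, c' i • v i = ∑ i ∈ s, c i • v i := by
  obtain ⟨f, hf, hfpos⟩ : ∃ f : ι → ℝ, ∑ i ∈ s, f i • v i = 0 ∧ ∃ i ∈ s, 0 < f i := by
    obtain ⟨f, hf, i, hi, hfi⟩ := not_linearIndepOn_finset_iff.mp hs
    rcases hfi.lt_or_gt with hneg | hpos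
    · exact ⟨-f, by simp [hf], i, hi, by simpa⟩
    · exact ⟨f, hf, i, hi, hpos⟩
  -- Move along the dependence `f` until the first coefficient hits zero.
  obtain ⟨i₀, hi₀, hmin⟩ := (s.filter (0 < f ·)).exists_min_image (fun i ↦ c i / f i)
    (by simpa [Finset.Nonempty] using hfpos)
  rw [Finset.mem_filter] at hi₀
  set r := c i₀ / f i₀
  have hr : 0 ≤ r := div_nonneg (hc i₀ hi₀.1) hi₀.2.le
  refine ⟨i₀, hi₀.1, fun i ↦ c i - r * f i, fun i hi ↦ ?_, ?_⟩
  · rcases le_or_gt (f i) 0 with hfi | hfi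
    · nlinarith [hc i hi]
    · have := hmin i (Finset.mem_filter.mpr ⟨hi, hfi⟩)
      rw [le_div_iff₀ hfi] at this
      linarith
  · have hi₀_zero : c i₀ - r * f i₀ = 0 := by rw [div_mul_cancel₀ _ hi₀.2.ne', sub_self]
    rw [Finset.sum_erase _ (by simp only [hi₀_zero, zero_smul])]
    simp [sub_smul, Finset.sum_sub_distrib, mul_smul, ← Finset.smul_sum, hf]

theorem exists_linearIndepOn_nonneg_combination (s : Finset ι) {c : ι → ℝ}
    (hc : ∀ i ∈ s, 0 ≤ c i) :
    ∃ t : Finset ι, LinearIndepOn ℝ v t ∧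
      ∃ c' : ι → ℝ, (∀ i ∈ t, 0 ≤ c' i) ∧ ∑ i ∈ t, c' i • v i = ∑ i ∈ s, c i • v i := by
  classical
  induction s using Finset.strongInduction generalizing c with
  | H s ih =>
    by_cases hs : LinearIndepOn ℝ v s
    · exact ⟨s, hs, c, hc, rfl⟩
    obtain ⟨i₀, hi₀, c', hc', hsum⟩ := exists_nonneg_combination_erase_of_not_linearIndepOn hs hc
    obtain ⟨t, ht, c'', hc'', hsum'⟩ := ih _ (Finset.erase_ssubset hi₀)
      (fun i hi ↦ hc' i (Finset.mem_of_mem_erase hi))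
    exact ⟨t, ht, c'', hc'', hsum'.trans hsum⟩

theorem isClosed_image_nonneg_fintypeLinearCombination [Fintype ι] [TopologicalSpace E]
    [IsTopologicalAddGroup E] [ContinuousSMul ℝ E] [T2Space E] (v : ι → E) :
    IsClosed (Fintype.linearCombination ℝ v '' Set.Ici 0) := by
  classical
  have hcover : Fintype.linearCombination ℝ v '' Set.Ici 0 =
      ⋃ t ∈ {t : Finset ι | LinearIndepOn ℝ v t},
        Fintype.linearCombination ℝ (fun i : t ↦ v i) '' Set.Ici 0 := by
    ext b
    simp only [Set.mem_image, Set.mem_Ici, Set.mem_iUnion, Set.mem_ofPred_eq,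
      Fintype.linearCombination_apply, exists_prop]
    constructor
    · rintro ⟨c, hc, rfl⟩
      obtain ⟨t, ht, c', hc', hsum⟩ :=
        exists_linearIndepOn_nonneg_combination (v := v) Finset.univ (fun i _ ↦ hc i)
      exact ⟨t, ht, fun i ↦ c' i, fun i ↦ hc' i i.2,
        (Finset.sum_coe_sort t fun i ↦ c' i • v i).trans hsum⟩
    · rintro ⟨t, -, c, hc, rfl⟩
      refine ⟨fun i ↦ if h : i ∈ t then c ⟨i, h⟩ else 0, fun i ↦ ?_, ?_⟩
      · dsimp only
        split_ifs
        exacts [hc _, le_rfl]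
      · simp [dite_smul, Finset.sum_attach_eq_sum_dite]
  rw [hcover]
  refine Set.Finite.isClosed_biUnion (Set.toFinite _) fun t ht ↦ ?_
  have hinj := LinearIndependent.fintypeLinearCombination_injective ht
  exact ((Fintype.linearCombination ℝ _).isClosedEmbedding_of_injective
    (LinearMap.ker_eq_bot.mpr hinj)).isClosedMap _ isClosed_Ici

end ConicCombination

theorem Matrix.exists_nonneg_mulVec_eq_of_forall_vecMul_nonneg {κ ι : Type*} [Fintype κ]
    [Fintype ι] (M : Matrix κ ι ℝ) (b : κ → ℝ) (h : ∀ y, 0 ≤ y ᵥ* M → 0 ≤ y ⬝ᵥ b) :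
    ∃ c, 0 ≤ c ∧ M *ᵥ c = b := by
  classical
  by_contra! hb
  have hcols : M.mulVecLin = Fintype.linearCombination ℝ M.col := by
    refine LinearMap.ext fun c ↦ funext fun k ↦ ?_
    rw [Fintype.linearCombination_apply]
    simp [mulVec, dotProduct, mul_comm]
  let K : ProperCone ℝ (κ → ℝ) :=
    ⟨(PointedCone.positive ℝ (ι → ℝ)).map M.mulVecLin, by
      change IsClosed ((PointedCone.positive ℝ (ι → ℝ)).map M.mulVecLin : Set (κ → ℝ))
      rw [PointedCone.coe_map, hcols]
      exact isClosed_image_nonneg_fintypeLinearCombination _⟩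
  have hmem {c : ι → ℝ} (hc : 0 ≤ c) : M *ᵥ c ∈ K := ⟨c, hc, rfl⟩
  have hbK : b ∉ K := by
    rintro ⟨c, hc, hcb⟩
    exact hb c hc hcb
  obtain ⟨f, hfK, hfb⟩ := K.hyperplane_separation_point hbK
  set y : κ → ℝ := fun k ↦ f (Pi.single k 1)
  have hf (x : κ → ℝ) : f x = y ⬝ᵥ x := by
    conv_lhs => rw [pi_eq_sum_univ' x]
    simp [y, dotProduct, mul_comm]
  have hy : 0 ≤ y ᵥ* M := fun i ↦ by
    have := hfK _ (hmem (Pi.single_nonneg.mpr zero_le_one : 0 ≤ Pi.single i (1 : ℝ)))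
    simp only [hf, dotProduct_mulVec] at this
    simpa using this
  linarith [h y hy, hf b]

section Duality

variable {κ ι : Type*} [Fintype ι]

theorem Matrix.dotProduct_nonneg_of_mulVec_nonpos {D : Matrix κ ι ℝ} {d : κ → ℝ} {c : ι → ℝ}
    {β : ℝ} {y₀ : ι → ℝ} (hy₀ : D *ᵥ y₀ ≤ d) (hβ : ∀ y, D *ᵥ y ≤ d → β ≤ c ⬝ᵥ y)
    {z : ι → ℝ} (hz : D *ᵥ z ≤ 0) : 0 ≤ c ⬝ᵥ z := by
  by_contra! hneg
  -- Far enough along the ray `y₀ + s • z`, the objective drops below `β`.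
  set s := (c ⬝ᵥ y₀ - β + 1) / -(c ⬝ᵥ z)
  have hs : 0 ≤ s := div_nonneg (by linarith [hβ y₀ hy₀]) (by linarith)
  have hfeas : D *ᵥ (y₀ + s • z) ≤ d := fun k ↦ by
    have := mul_nonpos_of_nonneg_of_nonpos hs (hz k)
    simp only [mulVec_add, mulVec_smul, Pi.add_apply, Pi.smul_apply, smul_eq_mul]
    linarith [hy₀ k]
  have hsz : s * (c ⬝ᵥ z) = -(c ⬝ᵥ y₀ - β + 1) := by
    rw [div_mul_eq_mul_div, mul_div_assoc, div_neg_self hneg.ne]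
    ring
  have := hβ _ hfeas
  rw [dotProduct_add, dotProduct_smul, smul_eq_mul, hsz] at this
  linarith

theorem Matrix.neg_mul_le_dotProduct_of_mulVec_le_smul {D : Matrix κ ι ℝ} {d : κ → ℝ}
    {c : ι → ℝ} {γ : ℝ} {y₀ : ι → ℝ} (hy₀ : D *ᵥ y₀ ≤ d) (hγ : ∀ y, D *ᵥ y ≤ d → -γ ≤ c ⬝ᵥ y)
    {z : ι → ℝ} {t : ℝ} (ht : 0 ≤ t) (hz : D *ᵥ z ≤ t • d) : -(t * γ) ≤ c ⬝ᵥ z := by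
  rcases ht.eq_or_lt with rfl | ht
  · simpa using dotProduct_nonneg_of_mulVec_nonpos hy₀ hγ (by simpa using hz)
  · have hfeas : D *ᵥ (t⁻¹ • z) ≤ d := by
      rw [mulVec_smul, inv_smul_le_iff_of_pos ht]
      exact hz
    have := mul_le_mul_of_nonneg_left (hγ _ hfeas) ht.le
    rwa [dotProduct_smul, smul_eq_mul, mul_inv_cancel_left₀ ht.ne', mul_neg] at this

theorem Matrix.exists_dual_certificate_of_forall_mulVec_le [Fintype κ] (D : Matrix κ ι ℝ)
    (d : κ → ℝ) (hcons : ∃ y, D *ᵥ y ≤ d) (c : ι → ℝ) (γ : ℝ) (h : ∀ y, D *ᵥ y ≤ d → -γ ≤ c ⬝ᵥ y) :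
    ∃ v, -(Dᵀ *ᵥ v) = c ∧ d ⬝ᵥ v ≤ γ ∧ 0 ≤ v := by
  obtain ⟨y₀, hy₀⟩ := hcons
  -- Farkas' lemma for the homogenized system, whose columns are `(D k, d k)` and `(0, 1)`.
  let N : Matrix (ι ⊕ Unit) (κ ⊕ Unit) ℝ := fromBlocks Dᵀ 0 (replicateRow Unit d) 1
  have hN : ∀ yt, 0 ≤ yt ᵥ* N → 0 ≤ yt ⬝ᵥ Sum.elim (-c) fun _ ↦ γ := by
    intro yt hyt
    obtain ⟨y, t, rfl⟩ : ∃ y t, yt = Sum.elim y fun _ ↦ t :=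
      ⟨yt ∘ Sum.inl, yt (.inr ()), (Sum.elim_comp_inl_inr yt).symm⟩
    have hrow : (fun _ : Unit ↦ t) ᵥ* replicateRow Unit d = t • d := by
      ext k
      simp [vecMul, dotProduct]
    simp only [N, vecMul_fromBlocks, Sum.elim_comp_inl, Sum.elim_comp_inr, vecMul_transpose,
      hrow, vecMul_zero, vecMul_one, zero_add, Sum.nonneg_elim_iff,
      sumElim_dotProduct_sumElim] at hyt ⊢
    have := neg_mul_le_dotProduct_of_mulVec_le_smul hy₀ h (z := -y) (t := t) (hyt.2 ())
      (by simpa [mulVec_neg, neg_le_iff_add_nonneg'] using hyt.1)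
    have hunit : (fun _ : Unit ↦ t) ⬝ᵥ (fun _ ↦ γ) = t * γ := by simp [dotProduct]
    rw [dotProduct_neg, dotProduct_comm, hunit]
    rw [dotProduct_neg] at this
    linarith
  obtain ⟨w, hw, hNw⟩ := N.exists_nonneg_mulVec_eq_of_forall_vecMul_nonneg
    (Sum.elim (-c) fun _ ↦ γ) hN
  obtain ⟨v, r, rfl⟩ : ∃ v r, w = Sum.elim v fun _ ↦ r :=
    ⟨w ∘ Sum.inl, w (.inr ()), (Sum.elim_comp_inl_inr w).symm⟩
  simp only [N, fromBlocks_mulVec, Sum.elim_comp_inl, Sum.elim_comp_inr, zero_mulVec, one_mulVec,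
    add_zero, Sum.elim_eq_iff, Sum.nonneg_elim_iff] at hNw hw
  refine ⟨v, by rw [hNw.1, neg_neg], ?_, hw.1⟩
  have hγ : d ⬝ᵥ v + r = γ := congrFun hNw.2 ()
  have hr : 0 ≤ r := hw.2 ()
  linarith

theorem Matrix.exists_dual_certificate_iff [Fintype κ] (D : Matrix κ ι ℝ) (d : κ → ℝ)
    (hcons : ∃ y, D *ᵥ y ≤ d) (c : ι → ℝ) (γ : ℝ) :
    (∃ v, -(Dᵀ *ᵥ v) = c ∧ d ⬝ᵥ v ≤ γ ∧ 0 ≤ v) ↔ ∀ y, D *ᵥ y ≤ d → -γ ≤ c ⬝ᵥ y := by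
  refine ⟨?_, exists_dual_certificate_of_forall_mulVec_le D d hcons c γ⟩
  rintro ⟨v, rfl, hvd, hv⟩ y hy
  have := dotProduct_le_dotProduct_of_nonneg_left hy hv
  rw [neg_dotProduct, mulVec_transpose, ← dotProduct_mulVec]
  linarith [dotProduct_comm v d]

theorem Matrix.exists_dual_certificate_iff_of_nonneg [Fintype κ] (A : Matrix κ ι ℝ) (a : κ → ℝ)
    (hcons : ∃ x, A *ᵥ x ≤ a ∧ 0 ≤ x) (c : ι → ℝ) (γ : ℝ) :
    (∃ u, -(Aᵀ *ᵥ u) ≤ c ∧ a ⬝ᵥ u ≤ γ ∧ 0 ≤ u) ↔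
      ∀ x, A *ᵥ x ≤ a → 0 ≤ x → -γ ≤ c ⬝ᵥ x := by
  constructor
  · rintro ⟨u, hAu, hua, hu⟩ x hx hx₀
    have h₁ := dotProduct_le_dotProduct_of_nonneg_right hAu hx₀
    have h₂ := dotProduct_le_dotProduct_of_nonneg_left hx hu
    rw [neg_dotProduct, mulVec_transpose, ← dotProduct_mulVec] at h₁
    linarith [dotProduct_comm u a]
  · -- Treat `0 ≤ x` as the extra constraints `-x ≤ 0`.
    classical
    intro h
    let M := fromRows A (-1 : Matrix ι ι ℝ)
    have hstack : ∀ x, M *ᵥ x ≤ Sum.elim a 0 ↔ A *ᵥ x ≤ a ∧ 0 ≤ x := by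
      intro x
      simp only [M, fromRows_mulVec, neg_mulVec, one_mulVec, Sum.elim_le_elim_iff,
        Left.neg_nonpos_iff]
    obtain ⟨w, hw, hwa, hw₀⟩ := exists_dual_certificate_of_forall_mulVec_le M (Sum.elim a 0)
      (by simpa only [hstack] using hcons) c γ fun x hx ↦ ((hstack x).1 hx).elim (h x)
    obtain ⟨u, s, rfl⟩ : ∃ u s, w = Sum.elim u s :=
      ⟨w ∘ Sum.inl, w ∘ Sum.inr, (Sum.elim_comp_inl_inr w).symm⟩
    simp only [M, transpose_fromRows, transpose_neg, transpose_one, fromCols_mulVec,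
      Sum.elim_comp_inl, Sum.elim_comp_inr, neg_mulVec, one_mulVec, neg_add_rev, neg_neg,
      sumElim_dotProduct_sumElim, zero_dotProduct, add_zero, Sum.nonneg_elim_iff] at hw hwa hw₀
    exact ⟨u, hw ▸ le_add_of_nonneg_left hw₀.2, hwa, hw₀.1⟩

end Duality

theorem stmt_12_general
    (n m q p : ℕ)
    (C : Matrix (Fin n) (Fin m) ℝ) (A : Matrix (Fin q) (Fin n) ℝ)
    (D : Matrix (Fin p) (Fin m) ℝ)
    (a : Fin q → ℝ) (d : Fin p → ℝ) (g : Fin n → ℝ) (e : Fin m → ℝ)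
    (X : Set (Fin n → ℝ))
    (hX : X = {x | A.mulVec x ≤ a ∧ 0 ≤ x})
    (hXne : X.Nonempty)
    (hDcons : ∃ y : Fin m → ℝ, D.mulVec y ≤ d)
    (h : ℝ) :
    (∀ y : Fin m → ℝ, D.mulVec y ≤ d →
      ∃ u : Fin q → ℝ,
        -(Aᵀ.mulVec u) ≤ C.mulVec y + g ∧ a ⬝ᵥ u ≤ e ⬝ᵥ y - h ∧ 0 ≤ u) ↔
    (∀ x : Fin n → ℝ, A.mulVec x ≤ a → 0 ≤ x →
      ∃ v : Fin p → ℝ,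
        -(Dᵀ.mulVec v) = Cᵀ.mulVec x + e ∧ d ⬝ᵥ v ≤ g ⬝ᵥ x - h ∧ 0 ≤ v) := by
  subst hX
  have hsaddle (x y) : -(e ⬝ᵥ y - h) ≤ (C *ᵥ y + g) ⬝ᵥ x ↔
      -(g ⬝ᵥ x - h) ≤ (Cᵀ *ᵥ x + e) ⬝ᵥ y := by
    rw [add_dotProduct, add_dotProduct, mulVec_transpose, ← dotProduct_mulVec,
      dotProduct_comm (C *ᵥ y)]
    constructor <;> intro <;> linarith
  calc _ ↔ ∀ y, D *ᵥ y ≤ d → ∀ x, A *ᵥ x ≤ a → 0 ≤ x → -(e ⬝ᵥ y - h) ≤ (C *ᵥ y + g) ⬝ᵥ x :=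
        forall₂_congr fun y _ ↦ exists_dual_certificate_iff_of_nonneg A a hXne _ _
    _ ↔ ∀ x, A *ᵥ x ≤ a → 0 ≤ x → ∀ y, D *ᵥ y ≤ d → -(g ⬝ᵥ x - h) ≤ (Cᵀ *ᵥ x + e) ⬝ᵥ y := by
        simp only [hsaddle]
        exact ⟨fun H x hA hx y hD ↦ H y hD x hA hx, fun H y hD x hA hx ↦ H x hA hx y hD⟩
    _ ↔ _ := forall₃_congr fun x _ _ ↦ (exists_dual_certificate_iff D d hDcons _ _).symm

/-- Duality principle for the parametric linear systems when `Y` is given by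
an arbitrary consistent system `D y ≤ d` (Theorem 5 of the paper). -/
theorem stmt_12
    (n m q p : ℕ) (hn : 0 < n) (hm : 0 < m) (hq : 0 < q) (hp : 0 < p)
    (C : Matrix (Fin n) (Fin m) ℝ) (A : Matrix (Fin q) (Fin n) ℝ)
    (D : Matrix (Fin p) (Fin m) ℝ)
    (a : Fin q → ℝ) (d : Fin p → ℝ) (g : Fin n → ℝ) (e : Fin m → ℝ)
    (X : Set (Fin n → ℝ))
    (hX : X = {x | A.mulVec x ≤ a ∧ 0 ≤ x})
    (hXne : X.Nonempty) (hXbd : Bornology.IsBounded X)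
    (hDcons : ∃ y : Fin m → ℝ, D.mulVec y ≤ d)
    (h : ℝ) :
    (∀ y : Fin m → ℝ, D.mulVec y ≤ d →
      ∃ u : Fin q → ℝ,
        -(Aᵀ.mulVec u) ≤ C.mulVec y + g ∧ a ⬝ᵥ u ≤ e ⬝ᵥ y - h ∧ 0 ≤ u) ↔
    (∀ x : Fin n → ℝ, A.mulVec x ≤ a → 0 ≤ x →
      ∃ v : Fin p → ℝ,
        -(Dᵀ.mulVec v) = Cᵀ.mulVec x + e ∧ d ⬝ᵥ v ≤ g ⬝ᵥ x - h ∧ 0 ≤ v) :=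
  stmt_12_general n m q p C A D a d g e X hX hXne hDcons h
end

section
/- Under the perfect-polytope hypotheses (a)–(c) on D y ≤ d and with X nonempty and bounded, the minimum z* of z over X × Y equals the minimal value h* of h for which the system S(h) has a basic feasible solution (x₁*, …, x_{n+q}*, v₁*, …, v_{p+1}*) such that the set of rows {D_k : v_k* > 0, 1 ≤ k ≤ p} of D is either linearly independent or empty. Moreover, given such a solution of S(h*): if the set is nonempty, then x* = (x₁*, …, x_n*) together with any solution y* of the system {D y ≤ d, (Dᵀv*)·y = d·v*} (where v* = (v₁*, …, v_p*)) is an optimal solution of the disjoint bilinear programming problem, i.e. z(x*, y*) = h*; if the set is empty, then v₁* = ⋯ = v_{p+1}* = 0 and x* together with an arbitrary y ∈ Y is an optimal solution, i.e. z(x*, y) = h* for every y ∈ Y. -/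
/-!
For fixed `x ∈ X`, minimizing `z(x, ·)` over the polytope `Y` is a linear program. Its minimum is
attained at a vertex `y₀` (Krein–Milman), where by (c) exactly `m` constraints are active; their
rows are independent, since otherwise `y₀` could be moved both ways along a common kernel vector,
and optimality of `y₀` writes `-(Cᵀx + e)` as a nonnegative combination `v` of them. Then
`(x, a - Ax, v, 0)` solves `S(g·x - d·v)`, and the conic Carathéodory reduction makes it basic
without enlarging its support, so `g·x - d·v` is an admissible `h` below every `z(x, y)`.

Conversely, every solution of `S(h)` satisfies `z(x, y) = h - v_{p+1} + v·(d - Dy)`, which is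
`≥ h - v_{p+1}` on `Y`, with equality when `y` is active on the support of `v`. When that support
indexes independent rows, extending them to `m` independent rows and applying (b) yields such a `y`.
Hence the two minimization problems have the same lower bounds, so the same minimum.
-/

open Matrix Finset Filter Topology

theorem isLeast_iff_of_forall_exists_le {α : Type*} [PartialOrder α] {S T : Set α} {a : α}
    (hST : ∀ s ∈ S, ∃ t ∈ T, t ≤ s) (hTS : ∀ t ∈ T, ∃ s ∈ S, s ≤ t) :
    IsLeast S a ↔ IsLeast T a := by
  suffices key : ∀ {S T : Set α}, (∀ s ∈ S, ∃ t ∈ T, t ≤ s) → (∀ t ∈ T, ∃ s ∈ S, s ≤ t) →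
      IsLeast S a → IsLeast T a from ⟨key hST hTS, key hTS hST⟩
  intro S T hST hTS ⟨haS, ha⟩
  have hlb : a ∈ lowerBounds T := fun t ht =>
    let ⟨_, hs, hst⟩ := hTS t ht
    (ha hs).trans hst
  obtain ⟨t, ht, hta⟩ := hST a haS
  exact ⟨le_antisymm hta (hlb ht) ▸ ht, hlb⟩

section ConicCaratheodory

variable {𝕜 ι V : Type*} [Field 𝕜] [LinearOrder 𝕜] [IsStrictOrderedRing 𝕜] [Fintype ι]
  [AddCommGroup V] [Module 𝕜 V] {w : ι → V} {α : ι → 𝕜}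

-- The ratio test of the simplex method: move along `-μ` until a first coordinate of `α` vanishes.
lemma exists_support_ssubset_of_sum_smul_eq_zero (hα : 0 ≤ α) {μ : ι → 𝕜}
    (hμ : ∑ i, μ i • w i = 0) (hsupp : ∀ i, μ i ≠ 0 → 0 < α i) (hpos : ∃ i, 0 < μ i) :
    ∃ β : ι → 𝕜, 0 ≤ β ∧ ∑ i, β i • w i = ∑ i, α i • w i ∧
      {i | 0 < β i} ⊂ {i | 0 < α i} := by
  obtain ⟨i₀, hi₀, hmin⟩ := exists_min_image {i | 0 < μ i} (fun i => α i / μ i)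
    (by simpa [Finset.Nonempty] using hpos)
  have hμ₀ : 0 < μ i₀ := by simpa using hi₀
  set t := α i₀ / μ i₀
  have ht : 0 ≤ t := div_nonneg (hα i₀) hμ₀.le
  refine ⟨α - t • μ, fun i => ?_, ?_, ?_, ?_⟩
  · rcases lt_or_ge 0 (μ i) with h | h
    · have := (le_div_iff₀ h).mp (hmin i (by simpa using h))
      simp only [Pi.zero_apply, Pi.sub_apply, Pi.smul_apply, smul_eq_mul]
      linarith
    · simp only [Pi.zero_apply, Pi.sub_apply, Pi.smul_apply, smul_eq_mul]
      linarith [show (0 : 𝕜) ≤ α i from hα i, mul_nonpos_of_nonneg_of_nonpos ht h]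
  · simp [sub_smul, Finset.sum_sub_distrib, mul_smul, ← Finset.smul_sum, hμ]
  · intro i hi
    by_contra h
    have hα0 : α i = 0 := le_antisymm (not_lt.mp h) (hα i)
    have hμ0 : μ i = 0 := by_contra fun h' => h (hsupp i h')
    simp [hα0, hμ0] at hi
  · refine fun hsub => (hsub (hsupp i₀ hμ₀.ne') : 0 < α i₀ - t * μ i₀).ne' ?_
    simp [t, div_mul_cancel₀ _ hμ₀.ne']

lemma exists_support_ssubset_of_not_linearIndepOn (hα : 0 ≤ α)
    (hdep : ¬ LinearIndepOn 𝕜 w {i | 0 < α i}) :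
    ∃ β : ι → 𝕜, 0 ≤ β ∧ ∑ i, β i • w i = ∑ i, α i • w i ∧
      {i | 0 < β i} ⊂ {i | 0 < α i} := by
  classical
  have hs : ({i | 0 < α i} : Set ι) = ↑({i | 0 < α i} : Finset ι) := by simp
  rw [hs, not_linearIndepOn_finset_iff] at hdep
  obtain ⟨f, hf, i₁, hi₁, hfi₁⟩ := hdep
  set μ : ι → 𝕜 := fun i => if 0 < α i then f i else 0
  have hμ : ∑ i, μ i • w i = 0 := by
    rw [← hf, Finset.sum_filter]
    simp only [μ, ite_smul, zero_smul]
  have hsupp : ∀ i, μ i ≠ 0 → 0 < α i := fun i hi => by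
    by_contra h; simp [μ, h] at hi
  have hμ₁ : μ i₁ ≠ 0 := by simpa [μ, (by simpa using hi₁ : 0 < α i₁)] using hfi₁
  rcases hμ₁.lt_or_gt with h | h
  · exact exists_support_ssubset_of_sum_smul_eq_zero hα (μ := -μ) (by simp [hμ])
      (fun i hi => hsupp i (by simpa using hi)) ⟨i₁, by simpa using h⟩
  · exact exists_support_ssubset_of_sum_smul_eq_zero hα hμ hsupp ⟨i₁, h⟩

variable (w) in
theorem exists_linearIndepOn_support_subset (hα : 0 ≤ α) :
    ∃ β : ι → 𝕜, 0 ≤ β ∧ ∑ i, β i • w i = ∑ i, α i • w i ∧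
      {i | 0 < β i} ⊆ {i | 0 < α i} ∧ LinearIndepOn 𝕜 w {i | 0 < β i} := by
  induction hs : {i | 0 < α i} using WellFoundedLT.induction generalizing α with
  | ind s ih =>
    subst hs
    by_cases hli : LinearIndepOn 𝕜 w {i | 0 < α i}
    · exact ⟨α, hα, rfl, subset_rfl, hli⟩
    obtain ⟨β, hβ, hsum, hlt⟩ := exists_support_ssubset_of_not_linearIndepOn hα hli
    obtain ⟨γ, hγ, hsum', hsub, hγli⟩ := ih _ hlt hβ rfl
    exact ⟨γ, hγ, hsum'.trans hsum, hsub.trans hlt.subset, hγli⟩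

end ConicCaratheodory

theorem exists_finset_superset_linearIndepOn_card_eq_finrank_span {ι K V : Type*} [Field K]
    [Finite ι] [AddCommGroup V] [Module K V] {v : ι → V} {s : Set ι}
    (hs : LinearIndepOn K v s) :
    ∃ I : Finset ι, s ⊆ I ∧ LinearIndepOn K v I ∧
      #I = Module.finrank K (Submodule.span K (Set.range v)) := by
  classical
  have := Fintype.ofFinite ι
  obtain ⟨b, -, hsb, hspan, hb⟩ := exists_linearIndepOn_extension hs (Set.subset_univ s)
  have hspan_eq : Submodule.span K (v '' b) = Submodule.span K (Set.range v) := by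
    refine le_antisymm (Submodule.span_mono (Set.image_subset_range _ _)) ?_
    rwa [Submodule.span_le, ← Set.image_univ]
  refine ⟨b.toFinset, by simpa using hsb, by simpa using hb, ?_⟩
  rw [← hspan_eq, Set.image_eq_range, finrank_span_eq_card hb]
  simp

theorem IsCompact.exists_mem_extremePoints_isMinOn {E : Type*} [AddCommGroup E] [Module ℝ E]
    [TopologicalSpace E] [T2Space E] [IsTopologicalAddGroup E] [ContinuousSMul ℝ E]
    [LocallyConvexSpace ℝ E] {s : Set E} (hs : IsCompact s) (hne : s.Nonempty)
    (l : StrongDual ℝ E) : ∃ y ∈ s.extremePoints ℝ, IsMinOn l s y := by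
  have hface : IsExposed ℝ s ((-l).toExposed s) := ContinuousLinearMap.toExposed.isExposed
  obtain ⟨y₁, hy₁, hmin⟩ := hs.exists_isMinOn hne l.continuous.continuousOn
  obtain ⟨y, hy⟩ := (hface.isCompact hs).extremePoints_nonempty
    ⟨y₁, hy₁, fun z hz => neg_le_neg (hmin hz)⟩
  refine ⟨y, hface.isExtreme.extremePoints_subset_extremePoints hy, fun z hz => ?_⟩
  exact neg_le_neg_iff.mp (hy.1.2 z hz)

section Polyhedron

variable {ι κ : Type*} [Fintype ι] [Fintype κ]

noncomputable def activeSet (D : Matrix ι κ ℝ) (d : ι → ℝ) (y : κ → ℝ) : Finset ι :=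
  {i | D i ⬝ᵥ y = d i}

variable {D : Matrix ι κ ℝ} {d : ι → ℝ} {y₀ w : κ → ℝ}

lemma eventually_mulVec_add_smul_le (hy₀ : D *ᵥ y₀ ≤ d)
    (hw : ∀ i ∈ activeSet D d y₀, D i ⬝ᵥ w ≤ 0) :
    ∀ᶠ t in 𝓝[>] (0 : ℝ), D *ᵥ (y₀ + t • w) ≤ d := by
  simp only [Pi.le_def, eventually_all]
  intro i
  have hval (t : ℝ) : (D *ᵥ (y₀ + t • w)) i = D i ⬝ᵥ y₀ + t * D i ⬝ᵥ w := by
    simp [mulVec]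
  simp only [hval]
  by_cases hi : D i ⬝ᵥ y₀ = d i
  · filter_upwards [self_mem_nhdsWithin] with t ht
    have := mul_nonpos_of_nonneg_of_nonpos (le_of_lt ht) (hw i (by simp [activeSet, hi]))
    linarith
  · have hlt : D i ⬝ᵥ y₀ < d i := lt_of_le_of_ne (hy₀ i) hi
    have hlim : Tendsto (fun t : ℝ => D i ⬝ᵥ y₀ + t * D i ⬝ᵥ w) (𝓝 0) (𝓝 (D i ⬝ᵥ y₀)) :=
      (by fun_prop : Continuous fun t : ℝ => D i ⬝ᵥ y₀ + t * D i ⬝ᵥ w).tendsto' 0 _ (by simp)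
    filter_upwards [nhdsWithin_le_nhds (hlim.eventually_lt_const hlt)] with t ht using ht.le

lemma eq_zero_of_mem_extremePoints (hy₀ : y₀ ∈ {y | D *ᵥ y ≤ d}.extremePoints ℝ)
    (hw : ∀ i ∈ activeSet D d y₀, D i ⬝ᵥ w = 0) : w = 0 := by
  obtain ⟨hy₀P, hext⟩ := mem_extremePoints.mp hy₀
  obtain ⟨t, hplus, hminus, ht⟩ :=
    ((eventually_mulVec_add_smul_le hy₀P fun i hi => (hw i hi).le).and
      ((eventually_mulVec_add_smul_le (w := -w) hy₀P fun i hi => by simp [hw i hi]).and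
        self_mem_nhdsWithin)).exists
  have hseg : y₀ ∈ openSegment ℝ (y₀ + t • w) (y₀ + t • -w) :=
    ⟨1 / 2, 1 / 2, by norm_num, by norm_num, by norm_num, by module⟩
  simpa [(ht : (0 : ℝ) < t).ne'] using (hext _ hplus _ hminus hseg).1

lemma dotProduct_nonneg_of_isMinOn {c : κ → ℝ} (hy₀ : D *ᵥ y₀ ≤ d)
    (hmin : IsMinOn (c ⬝ᵥ ·) {y | D *ᵥ y ≤ d} y₀) (hw : ∀ i ∈ activeSet D d y₀, D i ⬝ᵥ w ≤ 0) :
    0 ≤ c ⬝ᵥ w := by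
  obtain ⟨t, ht, htpos⟩ :=
    ((eventually_mulVec_add_smul_le hy₀ hw).and self_mem_nhdsWithin).exists
  have : c ⬝ᵥ y₀ ≤ c ⬝ᵥ (y₀ + t • w) := hmin ht
  rw [dotProduct_add, dotProduct_smul, smul_eq_mul] at this
  exact nonneg_of_mul_nonneg_right (by linarith) htpos

lemma surjective_mulVecLin_submatrix_activeSet (hy₀ : y₀ ∈ {y | D *ᵥ y ≤ d}.extremePoints ℝ)
    (hcard : #(activeSet D d y₀) = Fintype.card κ) :
    Function.Surjective (D.submatrix ((↑) : activeSet D d y₀ → ι) id).mulVecLin := by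
  refine (LinearMap.injective_iff_surjective_of_finrank_eq_finrank (by simp [hcard])).mp ?_
  refine LinearMap.ker_eq_bot.mp (LinearMap.ker_eq_bot'.mpr fun w hw => ?_)
  exact eq_zero_of_mem_extremePoints hy₀ fun i hi => congr_fun hw ⟨i, hi⟩

theorem exists_dual_of_isMinOn_of_mem_extremePoints {c : κ → ℝ}
    (hy₀ : y₀ ∈ {y | D *ᵥ y ≤ d}.extremePoints ℝ)
    (hcard : #(activeSet D d y₀) = Fintype.card κ)
    (hmin : IsMinOn (c ⬝ᵥ ·) {y | D *ᵥ y ≤ d} y₀) :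
    ∃ v : ι → ℝ, 0 ≤ v ∧ v ᵥ* D = -c ∧ (∀ i, 0 < v i → D i ⬝ᵥ y₀ = d i) ∧
      LinearIndepOn ℝ D.row {i | 0 < v i} := by
  classical
  set I := activeSet D d y₀
  have hsurj := surjective_mulVecLin_submatrix_activeSet hy₀ hcard
  set M : Matrix I κ ℝ := D.submatrix (↑) id
  -- the rows of `M` are independent because `M *ᵥ ·` hits every `Pi.single i 1`
  have hinj : Function.Injective M.vecMulLinear := by
    refine LinearMap.ker_eq_bot.mp (LinearMap.ker_eq_bot'.mpr fun u hu => funext fun i => ?_)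
    obtain ⟨w, hw⟩ := hsurj (Pi.single i 1)
    have := dotProduct_mulVec u M w
    simp_all
  obtain ⟨u, hu⟩ := ((LinearMap.injective_iff_surjective_of_finrank_eq_finrank
    (by simp [I, hcard])).mp hinj) (-c)
  have hu_nonneg : 0 ≤ u := fun i => by
    obtain ⟨w, hw⟩ := hsurj (-Pi.single i 1)
    have hcw : c ⬝ᵥ w = u i := by
      have hu' : u ᵥ* M = -c := hu
      have hw' : M *ᵥ w = -Pi.single i 1 := hw
      rw [← neg_neg c, ← hu', neg_dotProduct, ← dotProduct_mulVec, hw', dotProduct_neg,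
        dotProduct_single, mul_one, neg_neg]
    -- `w` leaves the `i`-th active constraint and keeps the other active ones tight
    refine hcw ▸ dotProduct_nonneg_of_isMinOn hy₀.1 hmin fun j hj => ?_
    have hj' : D j ⬝ᵥ w = -(Pi.single i 1 : I → ℝ) ⟨j, hj⟩ := congr_fun hw ⟨j, hj⟩
    rw [hj', neg_nonpos]
    exact (Pi.single_nonneg.mpr zero_le_one : (0 : I → ℝ) ≤ Pi.single i 1) _
  set v : ι → ℝ := fun i => if h : i ∈ I then u ⟨i, h⟩ else 0
  have hvsupp : ∀ i, 0 < v i → i ∈ I := fun i hi => by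
    by_contra h
    simp [v, h] at hi
  refine ⟨v, fun i => ?_, ?_, fun i hi => ?_, ?_⟩
  · by_cases h : i ∈ I
    · simpa [v, h] using hu_nonneg ⟨i, h⟩
    · simp [v, h]
  · ext j
    rw [← hu]
    simp only [vecMul, dotProduct, coe_vecMulLinear, M, submatrix_apply, id]
    rw [← Finset.sum_subset (subset_univ I) (fun i _ hi => by simp [v, hi]),
      ← Finset.sum_coe_sort I]
    simp [v]
  · simpa [I, activeSet] using hvsupp i hi
  · have hli : LinearIndependent ℝ M.row := vecMul_injective_iff.mp hinj
    exact LinearIndepOn.mono (s := I) hli hvsupp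

lemma transpose_mulVec_dotProduct_eq_of_active {v : ι → ℝ}
    (hact : ∀ i, v i ≠ 0 → D i ⬝ᵥ y₀ = d i) : (Dᵀ *ᵥ v) ⬝ᵥ y₀ = d ⬝ᵥ v := by
  rw [mulVec_transpose, ← dotProduct_mulVec, dotProduct_comm d]
  refine Finset.sum_congr rfl fun i _ => ?_
  by_cases hv : v i = 0
  · simp [hv]
  · rw [← hact i hv]
    rfl

end Polyhedron

namespace DisjointBilinear

variable {n m q p : ℕ}

section Blocks

variable (α : Fin n ⊕ Fin q ⊕ Fin p ⊕ Unit → ℝ)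

-- A solution of `S(h)` is `α = (x₁, …, x_n, x_{n+1}, …, x_{n+q}, v₁, …, v_p, v_{p+1})`.
abbrev xPart : Fin n → ℝ := fun j => α (.inl j)
abbrev slack : Fin q → ℝ := fun i => α (.inr (.inl i))
abbrev vPart : Fin p → ℝ := fun k => α (.inr (.inr (.inl k)))
abbrev vLast : ℝ := α (.inr (.inr (.inr ())))

end Blocks

variable (C : Matrix (Fin n) (Fin m) ℝ) (A : Matrix (Fin q) (Fin n) ℝ)
  (D : Matrix (Fin p) (Fin m) ℝ) (a : Fin q → ℝ) (d : Fin p → ℝ) (g : Fin n → ℝ) (e : Fin m → ℝ)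

def objective (x : Fin n → ℝ) (y : Fin m → ℝ) : ℝ := x ⬝ᵥ C *ᵥ y + g ⬝ᵥ x + e ⬝ᵥ y

def IsFeasible (h : ℝ) (α : Fin n ⊕ Fin q ⊕ Fin p ⊕ Unit → ℝ) : Prop :=
  0 ≤ α ∧ A *ᵥ xPart α + slack α = a ∧ Cᵀ *ᵥ xPart α + Dᵀ *ᵥ vPart α = -e ∧
    g ⬝ᵥ xPart α - d ⬝ᵥ vPart α + vLast α = h

def column : Fin n ⊕ Fin q ⊕ Fin p ⊕ Unit → (Fin q → ℝ) × (Fin m → ℝ) × ℝ :=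
  Sum.elim (fun j => (Aᵀ j, C j, g j)) <| Sum.elim (fun i => (Pi.single i 1, 0, 0)) <|
    Sum.elim (fun k => (0, D k, -d k)) fun _ => (0, 0, 1)

lemma sum_smul_column (α : Fin n ⊕ Fin q ⊕ Fin p ⊕ Unit → ℝ) :
    ∑ i, α i • column C A D d g i =
      (A *ᵥ xPart α + slack α, Cᵀ *ᵥ xPart α + Dᵀ *ᵥ vPart α,
        g ⬝ᵥ xPart α - d ⬝ᵥ vPart α + vLast α) := by
  simp [column, Fintype.sum_sum_type, Prod.ext_iff, funext_iff, mulVec, dotProduct, Prod.fst_sum,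
    Prod.snd_sum, Finset.sum_apply, Pi.single_apply, mul_comm, sub_eq_add_neg, add_assoc]

lemma objective_eq_dotProduct (x : Fin n → ℝ) (y : Fin m → ℝ) :
    objective C g e x y = (Cᵀ *ᵥ x + e) ⬝ᵥ y + g ⬝ᵥ x := by
  rw [objective, dotProduct_mulVec, ← mulVec_transpose, add_dotProduct]
  ring

variable {C A D a d g e} {h : ℝ} {α : Fin n ⊕ Fin q ⊕ Fin p ⊕ Unit → ℝ} {y : Fin m → ℝ}

lemma isFeasible_iff_sum_smul_column :
    IsFeasible C A D a d g e h α ↔ 0 ≤ α ∧ ∑ i, α i • column C A D d g i = (a, -e, h) := by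
  simp only [IsFeasible, sum_smul_column, Prod.mk.injEq]

namespace IsFeasible

lemma xPart_mem (hα : IsFeasible C A D a d g e h α) : A *ᵥ xPart α ≤ a ∧ 0 ≤ xPart α := by
  refine ⟨fun i => ?_, fun j => hα.1 _⟩
  rw [← hα.2.1]
  exact le_add_of_nonneg_right (hα.1 _)

lemma objective_eq (hα : IsFeasible C A D a d g e h α) (y : Fin m → ℝ) :
    objective C g e (xPart α) y = h - vLast α + vPart α ⬝ᵥ (d - D *ᵥ y) := by
  obtain ⟨-, -, hdual, hval⟩ := hα
  have hc : Cᵀ *ᵥ xPart α + e = -(Dᵀ *ᵥ vPart α) := by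
    rw [eq_neg_iff_add_eq_zero, add_right_comm, hdual, neg_add_cancel]
  rw [objective_eq_dotProduct, hc, neg_dotProduct, mulVec_transpose, ← dotProduct_mulVec, ← hval,
    dotProduct_sub, dotProduct_comm d]
  ring

lemma le_objective (hα : IsFeasible C A D a d g e h α) (hy : D *ᵥ y ≤ d) :
    h - vLast α ≤ objective C g e (xPart α) y := by
  rw [hα.objective_eq]
  exact le_add_of_nonneg_right (dotProduct_nonneg_of_nonneg (fun k => hα.1 _) (sub_nonneg.mpr hy))

lemma objective_eq_of_complementary (hα : IsFeasible C A D a d g e h α)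
    (hcompl : (Dᵀ *ᵥ vPart α) ⬝ᵥ y = d ⬝ᵥ vPart α) :
    objective C g e (xPart α) y = h - vLast α := by
  rw [hα.objective_eq, dotProduct_sub, dotProduct_mulVec, ← mulVec_transpose, hcompl,
    dotProduct_comm, sub_self, add_zero]

lemma objective_eq_of_isLeast (hα : IsFeasible C A D a d g e h α)
    (hmin : IsLeast (Set.image2 (objective C g e) {x | A *ᵥ x ≤ a ∧ 0 ≤ x} {y | D *ᵥ y ≤ d}) h)
    (hy : D *ᵥ y ≤ d) (hcompl : (Dᵀ *ᵥ vPart α) ⬝ᵥ y = d ⬝ᵥ vPart α) :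
    objective C g e (xPart α) y = h ∧ vLast α = 0 := by
  have hval := hα.objective_eq_of_complementary hcompl
  have hle := hmin.2 (Set.mem_image2_of_mem hα.xPart_mem hy)
  have hlast : 0 ≤ vLast α := hα.1 _
  constructor <;> linarith

lemma objective_eq_of_isLeast_of_vPart_eq_zero (hα : IsFeasible C A D a d g e h α)
    (hmin : IsLeast (Set.image2 (objective C g e) {x | A *ᵥ x ≤ a ∧ 0 ≤ x} {y | D *ᵥ y ≤ d}) h)
    (hv : vPart α = 0) (hYne : {y | D *ᵥ y ≤ d}.Nonempty) :
    vLast α = 0 ∧ ∀ y, D *ᵥ y ≤ d → objective C g e (xPart α) y = h := by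
  have hcompl (y : Fin m → ℝ) : (Dᵀ *ᵥ vPart α) ⬝ᵥ y = d ⬝ᵥ vPart α := by simp [hv]
  obtain ⟨y₀, hy₀⟩ := hYne
  exact ⟨(hα.objective_eq_of_isLeast hmin hy₀ (hcompl y₀)).2,
    fun y hy => (hα.objective_eq_of_isLeast hmin hy (hcompl y)).1⟩

lemma exists_objective_eq (hα : IsFeasible C A D a d g e h α)
    (hli : LinearIndepOn ℝ D.row {k | 0 < vPart α k}) (hrank : D.rank = m)
    (hb : ∀ I : Finset (Fin p), #I = m → LinearIndepOn ℝ D.row I →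
      ∃ y, D *ᵥ y ≤ d ∧ ∀ i ∈ I, D i ⬝ᵥ y = d i) :
    ∃ y, D *ᵥ y ≤ d ∧ objective C g e (xPart α) y = h - vLast α := by
  obtain ⟨I, hsub, hI, hcard⟩ := exists_finset_superset_linearIndepOn_card_eq_finrank_span hli
  rw [← rank_eq_finrank_span_row, hrank] at hcard
  obtain ⟨y, hy, hact⟩ := hb I hcard hI
  refine ⟨y, hy, hα.objective_eq_of_complementary ?_⟩
  exact transpose_mulVec_dotProduct_eq_of_active fun k hk =>
    hact k (hsub ((hα.1 _).lt_of_ne' hk))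

end IsFeasible

theorem exists_isFeasible_le_objective {x : Fin n → ℝ} (hx : A *ᵥ x ≤ a ∧ 0 ≤ x)
    (hY : IsCompact {y | D *ᵥ y ≤ d}) (hYne : {y | D *ᵥ y ≤ d}.Nonempty)
    (hc : ∀ y ∈ {y | D *ᵥ y ≤ d}.extremePoints ℝ, #(activeSet D d y) = m) :
    ∃ h α, IsFeasible C A D a d g e h α ∧ LinearIndepOn ℝ (column C A D d g) {i | 0 < α i} ∧
      LinearIndepOn ℝ D.row {k | 0 < vPart α k} ∧ ∀ y, D *ᵥ y ≤ d → h ≤ objective C g e x y := by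
  obtain ⟨y₀, hy₀, hmin⟩ := hY.exists_mem_extremePoints_isMinOn hYne
    (LinearMap.toContinuousLinearMap (dotProductBilin ℝ ℝ (Cᵀ *ᵥ x + e)))
  obtain ⟨v, hv, hvD, -, hli⟩ :=
    exists_dual_of_isMinOn_of_mem_extremePoints hy₀ (by simpa using hc y₀ hy₀) hmin
  set α₀ : Fin n ⊕ Fin q ⊕ Fin p ⊕ Unit → ℝ := Sum.elim x (Sum.elim (a - A *ᵥ x) (Sum.elim v 0))
  have hxα₀ : xPart α₀ = x := rfl
  have hvα₀ : vPart α₀ = v := rfl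
  have hlastα₀ : vLast α₀ = 0 := rfl
  have hα₀ : IsFeasible C A D a d g e (g ⬝ᵥ x - d ⬝ᵥ v) α₀ := by
    refine ⟨?_, add_sub_cancel _ _, ?_, add_zero _⟩
    · rintro (j | i | k | -)
      exacts [hx.2 j, sub_nonneg.mpr (hx.1 i), hv k, le_rfl]
    · rw [hxα₀, hvα₀, mulVec_transpose D, hvD]
      abel
  obtain ⟨β, hβ, hsum, hsub, hβli⟩ := exists_linearIndepOn_support_subset (column C A D d g) hα₀.1
  have hβfeas : IsFeasible C A D a d g e (g ⬝ᵥ x - d ⬝ᵥ v) β :=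
    isFeasible_iff_sum_smul_column.mpr ⟨hβ, hsum ▸ (isFeasible_iff_sum_smul_column.mp hα₀).2⟩
  refine ⟨_, β, hβfeas, hβli, hli.mono fun k hk => hsub hk, fun y hy => ?_⟩
  simpa [hxα₀, hlastα₀] using hα₀.le_objective hy

end DisjointBilinear

open DisjointBilinear

theorem stmt_18_general
    (n m q p : ℕ)
    (C : Matrix (Fin n) (Fin m) ℝ) (A : Matrix (Fin q) (Fin n) ℝ)
    (D : Matrix (Fin p) (Fin m) ℝ)
    (a : Fin q → ℝ) (d : Fin p → ℝ) (g : Fin n → ℝ) (e : Fin m → ℝ)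
    (hrank : D.rank = m)
    (z : (Fin n → ℝ) → (Fin m → ℝ) → ℝ)
    (hz : ∀ x y, z x y = x ⬝ᵥ C.mulVec y + g ⬝ᵥ x + e ⬝ᵥ y)
    (X : Set (Fin n → ℝ)) (Y : Set (Fin m → ℝ))
    (hX : X = {x | A.mulVec x ≤ a ∧ 0 ≤ x})
    (hYdef : Y = {y | D.mulVec y ≤ d})
    -- perfect polytope hypotheses (a)-(c)
    (hYbd : Bornology.IsBounded Y) (hYint : (interior Y).Nonempty)
    (hb : ∀ I : Finset (Fin p), I.card = m →
      LinearIndependent ℝ (fun i : {i : Fin p // i ∈ I} => D i.1) →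
      ∃ y₀ : Fin m → ℝ, (∀ i ∈ I, D i ⬝ᵥ y₀ = d i) ∧ y₀ ∈ Set.extremePoints ℝ Y)
    (hc : ∀ y ∈ Set.extremePoints ℝ Y,
      (Finset.univ.filter (fun i => D i ⬝ᵥ y = d i)).card = m)
    -- the columns of the matrix W of system S(h)
    (col : (Fin n ⊕ Fin q ⊕ Fin p ⊕ Unit) → ((Fin q → ℝ) × (Fin m → ℝ) × ℝ))
    (hcol₁ : ∀ j : Fin n, col (Sum.inl j) = (fun i => A i j, fun j' => C j j', g j))
    (hcol₂ : ∀ i : Fin q, col (Sum.inr (Sum.inl i)) = (Pi.single i 1, 0, 0))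
    (hcol₃ : ∀ k : Fin p, col (Sum.inr (Sum.inr (Sum.inl k))) = (0, fun j' => D k j', -(d k)))
    (hcol₄ : col (Sum.inr (Sum.inr (Sum.inr ()))) = (0, 0, 1))
    -- feasibility for the system S(h)
    (Feas : ℝ → ((Fin n ⊕ Fin q ⊕ Fin p ⊕ Unit) → ℝ) → Prop)
    (hFeas : ∀ (h : ℝ) (α : (Fin n ⊕ Fin q ⊕ Fin p ⊕ Unit) → ℝ), Feas h α ↔
      (∀ idx, 0 ≤ α idx) ∧
      (∀ i : Fin q,
        (∑ j : Fin n, A i j * α (Sum.inl j)) + α (Sum.inr (Sum.inl i)) = a i) ∧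
      (∀ j : Fin m,
        (∑ i : Fin n, C i j * α (Sum.inl i)) +
          (∑ k : Fin p, D k j * α (Sum.inr (Sum.inr (Sum.inl k)))) = -(e j)) ∧
      ((∑ i : Fin n, g i * α (Sum.inl i)) -
          (∑ k : Fin p, d k * α (Sum.inr (Sum.inr (Sum.inl k)))) +
          α (Sum.inr (Sum.inr (Sum.inr ()))) = h))
    (IsBasicSol : ((Fin n ⊕ Fin q ⊕ Fin p ⊕ Unit) → ℝ) → Prop)
    (hBasic : ∀ α, IsBasicSol α ↔
      LinearIndependent ℝ (fun idx : {idx // 0 < α idx} => col idx.1)) :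
    (∀ zstar : ℝ,
      IsLeast (Set.image2 z X Y) zstar ↔
        IsLeast {h : ℝ | ∃ α, Feas h α ∧ IsBasicSol α ∧
          (LinearIndependent ℝ
            (fun k : {k : Fin p // 0 < α (Sum.inr (Sum.inr (Sum.inl k)))} => D k.1) ∨
           ∀ k : Fin p, ¬ 0 < α (Sum.inr (Sum.inr (Sum.inl k))))} zstar) ∧
    (∀ zstar : ℝ, IsLeast (Set.image2 z X Y) zstar →
      ∀ α, Feas zstar α → IsBasicSol α →
        (LinearIndependent ℝ
          (fun k : {k : Fin p // 0 < α (Sum.inr (Sum.inr (Sum.inl k)))} => D k.1) ∨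
         ∀ k : Fin p, ¬ 0 < α (Sum.inr (Sum.inr (Sum.inl k)))) →
        (((∃ k : Fin p, 0 < α (Sum.inr (Sum.inr (Sum.inl k)))) →
          ∀ y : Fin m → ℝ, D.mulVec y ≤ d →
            (∑ j : Fin m,
              (∑ k : Fin p, D k j * α (Sum.inr (Sum.inr (Sum.inl k)))) * y j) =
              (∑ k : Fin p, d k * α (Sum.inr (Sum.inr (Sum.inl k)))) →
            z (fun j => α (Sum.inl j)) y = zstar) ∧
         ((¬ ∃ k : Fin p, 0 < α (Sum.inr (Sum.inr (Sum.inl k)))) →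
          (∀ k : Fin p, α (Sum.inr (Sum.inr (Sum.inl k))) = 0) ∧
          α (Sum.inr (Sum.inr (Sum.inr ()))) = 0 ∧
          ∀ y ∈ Y, z (fun j => α (Sum.inl j)) y = zstar))) := by
  obtain rfl : z = objective C g e := funext₂ hz
  subst hX hYdef
  obtain rfl : col = column C A D d g := by
    funext i
    rcases i with j | i | k | u
    exacts [hcol₁ j, hcol₂ i, hcol₃ k, hcol₄]
  have hF : ∀ h α, Feas h α ↔ IsFeasible C A D a d g e h α := fun h α => by
    rw [hFeas]
    simp only [IsFeasible, funext_iff]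
    rfl
  have hYc : IsCompact {y | D *ᵥ y ≤ d} :=
    Metric.isCompact_of_isClosed_isBounded (isClosed_le (by fun_prop) continuous_const) hYbd
  have hYne := hYint.mono interior_subset
  refine ⟨fun zstar => isLeast_iff_of_forall_exists_le ?_ ?_, ?_⟩
  · rintro _ ⟨x, hx, y, hy, rfl⟩
    obtain ⟨h, α, hα, hbasic, hli, hle⟩ := exists_isFeasible_le_objective hx hYc hYne hc
    exact ⟨h, ⟨α, (hF h α).mpr hα, (hBasic α).mpr hbasic, Or.inl hli⟩, hle y hy⟩
  · rintro h ⟨α, hα, -, hcond⟩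
    replace hα := (hF h α).mp hα
    have hli : LinearIndepOn ℝ D.row {k | 0 < vPart α k} :=
      hcond.elim id fun h0 => Set.eq_empty_of_forall_notMem h0 ▸ linearIndepOn_empty ℝ D.row
    obtain ⟨y, hy, hval⟩ := hα.exists_objective_eq hli hrank
      fun I hI hIli => (hb I hI hIli).imp fun y hy => ⟨hy.2.1, hy.1⟩
    exact ⟨_, Set.mem_image2_of_mem hα.xPart_mem hy, hval ▸ sub_le_self _ (hα.1 _)⟩
  · intro zstar hmin α hα _ _
    replace hα := (hF zstar α).mp hα
    refine ⟨fun _ y hy hcompl => (hα.objective_eq_of_isLeast hmin hy hcompl).1, fun hnone => ?_⟩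
    have hv : vPart α = 0 :=
      funext fun k => le_antisymm (not_lt.mp fun hk => hnone ⟨k, hk⟩) (hα.1 _)
    exact ⟨congr_fun hv, hα.objective_eq_of_isLeast_of_vPart_eq_zero hmin hv hYne⟩

/-- Theorem 9 of the paper: the optimal value of the disjoint bilinear
programming problem with a perfect disjoint subset equals the minimal `h` for which `S(h)`
has a basic feasible solution whose positive `v`-components index linearly independent (or
no) rows of `D`, and the optimal solutions are recovered from such a basic solution. -/
theorem stmt_18
    (n m q p : ℕ) (hn : 0 < n) (hm : 0 < m) (hq : 0 < q) (hmp : m < p)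
    (C : Matrix (Fin n) (Fin m) ℝ) (A : Matrix (Fin q) (Fin n) ℝ)
    (D : Matrix (Fin p) (Fin m) ℝ)
    (a : Fin q → ℝ) (d : Fin p → ℝ) (g : Fin n → ℝ) (e : Fin m → ℝ)
    (hrank : D.rank = m)
    (z : (Fin n → ℝ) → (Fin m → ℝ) → ℝ)
    (hz : ∀ x y, z x y = x ⬝ᵥ C.mulVec y + g ⬝ᵥ x + e ⬝ᵥ y)
    (X : Set (Fin n → ℝ)) (Y : Set (Fin m → ℝ))
    (hX : X = {x | A.mulVec x ≤ a ∧ 0 ≤ x})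
    (hYdef : Y = {y | D.mulVec y ≤ d})
    -- perfect polytope hypotheses (a)-(c)
    (hnored : ∀ i₀ : Fin p,
      ¬ ∀ y : Fin m → ℝ, (∀ i, i ≠ i₀ → D i ⬝ᵥ y ≤ d i) → D i₀ ⬝ᵥ y ≤ d i₀)
    (hYbd : Bornology.IsBounded Y) (hYint : (interior Y).Nonempty)
    (hb : ∀ I : Finset (Fin p), I.card = m →
      LinearIndependent ℝ (fun i : {i : Fin p // i ∈ I} => D i.1) →
      ∃ y₀ : Fin m → ℝ, (∀ i ∈ I, D i ⬝ᵥ y₀ = d i) ∧ y₀ ∈ Set.extremePoints ℝ Y)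
    (hc : ∀ y ∈ Set.extremePoints ℝ Y,
      (Finset.univ.filter (fun i => D i ⬝ᵥ y = d i)).card = m)
    (hXne : X.Nonempty) (hXbd : Bornology.IsBounded X)
    -- the columns of the matrix W of system S(h)
    (col : (Fin n ⊕ Fin q ⊕ Fin p ⊕ Unit) → ((Fin q → ℝ) × (Fin m → ℝ) × ℝ))
    (hcol₁ : ∀ j : Fin n, col (Sum.inl j) = (fun i => A i j, fun j' => C j j', g j))
    (hcol₂ : ∀ i : Fin q, col (Sum.inr (Sum.inl i)) = (Pi.single i 1, 0, 0))
    (hcol₃ : ∀ k : Fin p, col (Sum.inr (Sum.inr (Sum.inl k))) = (0, fun j' => D k j', -(d k)))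
    (hcol₄ : col (Sum.inr (Sum.inr (Sum.inr ()))) = (0, 0, 1))
    -- feasibility for the system S(h)
    (Feas : ℝ → ((Fin n ⊕ Fin q ⊕ Fin p ⊕ Unit) → ℝ) → Prop)
    (hFeas : ∀ (h : ℝ) (α : (Fin n ⊕ Fin q ⊕ Fin p ⊕ Unit) → ℝ), Feas h α ↔
      (∀ idx, 0 ≤ α idx) ∧
      (∀ i : Fin q,
        (∑ j : Fin n, A i j * α (Sum.inl j)) + α (Sum.inr (Sum.inl i)) = a i) ∧
      (∀ j : Fin m,
        (∑ i : Fin n, C i j * α (Sum.inl i)) +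
          (∑ k : Fin p, D k j * α (Sum.inr (Sum.inr (Sum.inl k)))) = -(e j)) ∧
      ((∑ i : Fin n, g i * α (Sum.inl i)) -
          (∑ k : Fin p, d k * α (Sum.inr (Sum.inr (Sum.inl k)))) +
          α (Sum.inr (Sum.inr (Sum.inr ()))) = h))
    (IsBasicSol : ((Fin n ⊕ Fin q ⊕ Fin p ⊕ Unit) → ℝ) → Prop)
    (hBasic : ∀ α, IsBasicSol α ↔
      LinearIndependent ℝ (fun idx : {idx // 0 < α idx} => col idx.1)) :
    (∀ zstar : ℝ,
      IsLeast (Set.image2 z X Y) zstar ↔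
        IsLeast {h : ℝ | ∃ α, Feas h α ∧ IsBasicSol α ∧
          (LinearIndependent ℝ
            (fun k : {k : Fin p // 0 < α (Sum.inr (Sum.inr (Sum.inl k)))} => D k.1) ∨
           ∀ k : Fin p, ¬ 0 < α (Sum.inr (Sum.inr (Sum.inl k))))} zstar) ∧
    (∀ zstar : ℝ, IsLeast (Set.image2 z X Y) zstar →
      ∀ α, Feas zstar α → IsBasicSol α →
        (LinearIndependent ℝ
          (fun k : {k : Fin p // 0 < α (Sum.inr (Sum.inr (Sum.inl k)))} => D k.1) ∨
         ∀ k : Fin p, ¬ 0 < α (Sum.inr (Sum.inr (Sum.inl k)))) →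
        (((∃ k : Fin p, 0 < α (Sum.inr (Sum.inr (Sum.inl k)))) →
          ∀ y : Fin m → ℝ, D.mulVec y ≤ d →
            (∑ j : Fin m,
              (∑ k : Fin p, D k j * α (Sum.inr (Sum.inr (Sum.inl k)))) * y j) =
              (∑ k : Fin p, d k * α (Sum.inr (Sum.inr (Sum.inl k)))) →
            z (fun j => α (Sum.inl j)) y = zstar) ∧
         ((¬ ∃ k : Fin p, 0 < α (Sum.inr (Sum.inr (Sum.inl k)))) →
          (∀ k : Fin p, α (Sum.inr (Sum.inr (Sum.inl k))) = 0) ∧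
          α (Sum.inr (Sum.inr (Sum.inr ()))) = 0 ∧
          ∀ y ∈ Y, z (fun j => α (Sum.inl j)) y = zstar))) :=
  stmt_18_general n m q p C A D a d g e hrank z hz X Y hX hYdef hYbd hYint hb hc col hcol₁ hcol₂
    hcol₃ hcol₄ Feas hFeas IsBasicSol hBasic
end
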